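/- Low-frequency contraction for Taylor transmission conditions without overlap (Theorem 3.3, first case): for every Fourier frequency k with 0 < k < ω/Cp (so λ₁ and λ₂ are purely imaginary with positive imaginary parts), both roots of the quadratic Q₀(z) = z² − (X₀² + 2Y₀)z + Y₀² have modulus strictly less than 1; hence the non-overlapping Schwarz method with zeroth-order Taylor transmission conditions converges on these frequencies. -/

import Mathlib

/-!
For `0 < k < ω/Cp` both `λⱼ = iξⱼ` are purely imaginary with `ξⱼ > 0`, and everything at `δ = 0`
becomes real. With `a = Z₁ - Z₂ > 0`, `v = ω³(ξ₁ + ξ₂Cp/Cs)` and `t = ω³(ξ₂Cp/Cs - ξ₁)` one has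
`D = -(a + v)` and `X₀ = b₁₁ - b₂₂ = 2t/(a + v)`; the identity
`K² = 4Z₁(4Cs³k² + Cpω²) - 4ω⁶Cp/Cs` turns `Y₀ = det B` into `D(-λ₁, -λ₂)/D(λ₁, λ₂) = (a - v)/(a + v)`.
As `|t| < v`, this gives `|Y₀| < 1` and `|X₀| < 1 - Y₀`, hence the Schur–Cohn conditions
`|Y₀²| < 1`, `|X₀² + 2Y₀| < 1 + Y₀²` that put both roots of the real quadratic `Q₀` inside the unit
disk.
-/

noncomputable section

open Complex

/-- `λ₁ = √(k² − ω²/Cs²)`, principal branch of the complex square root. -/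
def lam1 (ω Cs k : ℝ) : ℂ := ((k ^ 2 - ω ^ 2 / Cs ^ 2 : ℝ) : ℂ) ^ ((1 : ℂ) / 2)

/-- `λ₂ = √(k² − ω²/Cp²)`, principal branch of the complex square root. -/
def lam2 (ω Cp k : ℝ) : ℂ := ((k ^ 2 - ω ^ 2 / Cp ^ 2 : ℝ) : ℂ) ^ ((1 : ℂ) / 2)

/-- `Z₁ = Cs³(k² + λ₁²)² + ω²Cp·k²`. -/
def Z1 (ω Cs Cp k : ℝ) : ℂ :=
  (Cs : ℂ) ^ 3 * ((k : ℂ) ^ 2 + (lam1 ω Cs k) ^ 2) ^ 2 + (ω : ℂ) ^ 2 * (Cp : ℂ) * (k : ℂ) ^ 2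

/-- `Z₂ = (4Cs³k² + Cpω²)λ₁λ₂`. -/
def Z2 (ω Cs Cp k : ℝ) : ℂ :=
  (4 * (Cs : ℂ) ^ 3 * (k : ℂ) ^ 2 + (Cp : ℂ) * (ω : ℂ) ^ 2) * lam1 ω Cs k * lam2 ω Cp k

/-- `K = 2k(Cpω² + 2Cs³(k² + λ₁²))`. -/
def Kq (ω Cs Cp k : ℝ) : ℂ :=
  2 * (k : ℂ) * ((Cp : ℂ) * (ω : ℂ) ^ 2 + 2 * (Cs : ℂ) ^ 3 * ((k : ℂ) ^ 2 + (lam1 ω Cs k) ^ 2))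

/-- `D = −Z₁ + Z₂ + iω³(λ₁ + λ₂Cp/Cs)`. -/
def Dq (ω Cs Cp k : ℝ) : ℂ :=
  -Z1 ω Cs Cp k + Z2 ω Cs Cp k +
    Complex.I * (ω : ℂ) ^ 3 * (lam1 ω Cs k + lam2 ω Cp k * (Cp : ℂ) / (Cs : ℂ))

/-- `b₁₁ = (−Z₁ − Z₂ − iω³(λ₁ − λ₂Cp/Cs))/D`. -/
def b11 (ω Cs Cp k : ℝ) : ℂ :=
  (-Z1 ω Cs Cp k - Z2 ω Cs Cp k -
    Complex.I * (ω : ℂ) ^ 3 * (lam1 ω Cs k - lam2 ω Cp k * (Cp : ℂ) / (Cs : ℂ))) / Dq ω Cs Cp k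

/-- `b₁₂ = iλ₂K/D`. -/
def b12 (ω Cs Cp k : ℝ) : ℂ :=
  Complex.I * lam2 ω Cp k * Kq ω Cs Cp k / Dq ω Cs Cp k

/-- `b₂₁ = −iλ₁K/D`. -/
def b21 (ω Cs Cp k : ℝ) : ℂ :=
  -Complex.I * lam1 ω Cs k * Kq ω Cs Cp k / Dq ω Cs Cp k

/-- `b₂₂ = (−Z₁ − Z₂ + iω³(λ₁ − λ₂Cp/Cs))/D`. -/
def b22 (ω Cs Cp k : ℝ) : ℂ :=
  (-Z1 ω Cs Cp k - Z2 ω Cs Cp k +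
    Complex.I * (ω : ℂ) ^ 3 * (lam1 ω Cs k - lam2 ω Cp k * (Cp : ℂ) / (Cs : ℂ))) / Dq ω Cs Cp k

/-- `X_δ = e^{−λ₁δ}b₁₁ − e^{−λ₂δ}b₂₂`. -/
def Xd (ω Cs Cp k δ : ℝ) : ℂ :=
  Complex.exp (-(lam1 ω Cs k) * (δ : ℂ)) * b11 ω Cs Cp k -
    Complex.exp (-(lam2 ω Cp k) * (δ : ℂ)) * b22 ω Cs Cp k

/-- `Y_δ = e^{−(λ₁+λ₂)δ}(b₁₁b₂₂ − b₁₂b₂₁)`. -/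
def Yd (ω Cs Cp k δ : ℝ) : ℂ :=
  Complex.exp (-(lam1 ω Cs k + lam2 ω Cp k) * (δ : ℂ)) *
    (b11 ω Cs Cp k * b22 ω Cs Cp k - b12 ω Cs Cp k * b21 ω Cs Cp k)

/-- The quadratic `Q_δ(z) = z² − (X_δ² + 2Y_δ)z + Y_δ²` whose roots are the eigenvalues `r±`
of the double-iteration operator of the Schwarz method with zeroth-order Taylor
transmission conditions. -/
def Qd (ω Cs Cp k δ : ℝ) (z : ℂ) : ℂ :=
  z ^ 2 - ((Xd ω Cs Cp k δ) ^ 2 + 2 * Yd ω Cs Cp k δ) * z + (Yd ω Cs Cp k δ) ^ 2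

theorem norm_lt_one_of_sq_sub_mul_add_eq_zero {p q : ℝ} (hq : |q| < 1) (hp : |p| < 1 + q)
    {z : ℂ} (hz : z ^ 2 - p * z + q = 0) : ‖z‖ < 1 := by
  have hre : z.re ^ 2 - z.im ^ 2 - p * z.re + q = 0 := by
    simpa [sq] using congrArg re hz
  have him : z.im * (2 * z.re - p) = 0 := by
    have := congrArg im hz
    simp only [sq, sub_im, add_im, mul_im, ofReal_re, ofReal_im, zero_im] at this
    linarith
  rw [← sq_lt_one_iff₀ (norm_nonneg z), Complex.sq_norm, normSq_apply]
  obtain ⟨hq₁, hq₂⟩ := abs_lt.1 hq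
  obtain ⟨hp₁, hp₂⟩ := abs_lt.1 hp
  rcases mul_eq_zero.1 him with hreal | hvertex
  · rw [hreal] at hre ⊢
    have hlt : z.re < 1 := by nlinarith
    have hgt : -1 < z.re := by nlinarith
    nlinarith
  · nlinarith

theorem norm_lt_one_of_sq_sub_mul_add_sq_eq_zero {X Y : ℝ} (hY : |Y| < 1) (hX : |X| < 1 - Y)
    {z : ℂ} (hz : z ^ 2 - ((X : ℂ) ^ 2 + 2 * Y) * z + (Y : ℂ) ^ 2 = 0) : ‖z‖ < 1 := by
  refine norm_lt_one_of_sq_sub_mul_add_eq_zero (p := X ^ 2 + 2 * Y) (q := Y ^ 2) ?_ ?_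
    (by push_cast; exact hz)
  · rw [abs_pow]
    exact pow_lt_one₀ (abs_nonneg Y) hY two_ne_zero
  · obtain ⟨hY₁, hY₂⟩ := abs_lt.1 hY
    have hX2 : X ^ 2 < (1 - Y) ^ 2 := sq_lt_sq' (abs_lt.1 hX).1 (abs_lt.1 hX).2
    rw [abs_lt]
    constructor <;> nlinarith [sq_nonneg X]

theorem abs_sub_div_add_lt_one_and_abs_two_mul_div_add_lt {a v t : ℝ} (ha : 0 < a)
    (ht : |t| < v) : |(a - v) / (a + v)| < 1 ∧ |2 * t / (a + v)| < 1 - (a - v) / (a + v) := by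
  have hv : 0 < v := (abs_nonneg t).trans_lt ht
  have hS : 0 < a + v := add_pos ha hv
  refine ⟨?_, ?_⟩
  · rw [abs_lt, lt_div_iff₀ hS, div_lt_one hS]
    constructor <;> linarith
  · rw [show 1 - (a - v) / (a + v) = 2 * v / (a + v) by field_simp; ring, abs_div, abs_of_pos hS,
      div_lt_div_iff_of_pos_right hS, abs_mul, abs_two]
    linarith

theorem ofReal_cpow_one_half_of_neg {r : ℝ} (hr : r < 0) :
    (r : ℂ) ^ ((1 : ℂ) / 2) = I * √(-r) := by
  rw [ofReal_cpow_of_nonpos hr.le, Real.sqrt_eq_rpow, ofReal_cpow (neg_nonneg.2 hr.le)]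
  push_cast
  rw [show (Real.pi : ℂ) * I * (1 / 2) = Real.pi / 2 * I by ring, exp_pi_div_two_mul_I, mul_comm]

theorem lam1_sq (ω C k : ℝ) : lam1 ω C k ^ 2 = (k : ℂ) ^ 2 - (ω : ℂ) ^ 2 / (C : ℂ) ^ 2 := by
  rw [lam1, one_div, cpow_ofNat_inv_pow]
  push_cast
  rfl

theorem lam1_eq_I_mul_sqrt {ω C k : ℝ} (h : k ^ 2 < ω ^ 2 / C ^ 2) :
    lam1 ω C k = I * √(ω ^ 2 / C ^ 2 - k ^ 2) := by
  rw [lam1, ofReal_cpow_one_half_of_neg (by linarith), neg_sub]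

theorem exists_lam_eq_I_mul_of_lt {ω Cs Cp k : ℝ} (hCs : 0 < Cs) (hCsCp : Cs < Cp)
    (hk0 : 0 < k) (hk : k < ω / Cp) :
    ∃ ξ₁ ξ₂ : ℝ, 0 < ξ₁ ∧ 0 < ξ₂ ∧ lam1 ω Cs k = I * ξ₁ ∧ lam2 ω Cp k = I * ξ₂ := by
  have hCp : 0 < Cp := hCs.trans hCsCp
  have hkp : k ^ 2 < ω ^ 2 / Cp ^ 2 := by
    rw [← div_pow]
    exact pow_lt_pow_left₀ hk hk0.le two_ne_zero
  have hks : k ^ 2 < ω ^ 2 / Cs ^ 2 :=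
    hkp.trans_le (div_le_div_of_nonneg_left (sq_nonneg ω) (by positivity)
      (pow_le_pow_left₀ hCs.le hCsCp.le 2))
  -- `lam2 ω Cp k` unfolds to `lam1 ω Cp k`
  exact ⟨_, _, Real.sqrt_pos.2 (sub_pos.2 hks), Real.sqrt_pos.2 (sub_pos.2 hkp),
    lam1_eq_I_mul_sqrt hks, lam1_eq_I_mul_sqrt hkp⟩

theorem Xd_zero_mul_Dq {ω Cs Cp k : ℝ} (hD : Dq ω Cs Cp k ≠ 0) :
    Xd ω Cs Cp k 0 * Dq ω Cs Cp k =
      -2 * I * (ω : ℂ) ^ 3 * (lam1 ω Cs k - lam2 ω Cp k * (Cp : ℂ) / (Cs : ℂ)) := by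
  simp only [Xd, b11, b22, ofReal_zero, mul_zero, exp_zero, one_mul]
  field_simp
  ring

theorem Kq_sq {ω Cs Cp k : ℝ} (hCs : Cs ≠ 0) :
    Kq ω Cs Cp k ^ 2 =
      4 * Z1 ω Cs Cp k * (4 * (Cs : ℂ) ^ 3 * (k : ℂ) ^ 2 + (Cp : ℂ) * (ω : ℂ) ^ 2) -
        4 * (ω : ℂ) ^ 6 * (Cp : ℂ) / (Cs : ℂ) := by
  have hCs' : (Cs : ℂ) ≠ 0 := ofReal_ne_zero.2 hCs
  have h : (Cs : ℂ) ^ 2 * lam1 ω Cs k ^ 2 = Cs ^ 2 * k ^ 2 - ω ^ 2 := by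
    rw [lam1_sq]
    field_simp
  -- `4 Z₁ (4Cs³k² + Cpω²) - K² = 4 Cs³ Cp ω² (λ₁² - k²)²` and `λ₁² - k² = -ω²/Cs²`
  simp only [Kq, Z1]
  field_simp
  linear_combination (-4 * (Cp : ℂ) * ω ^ 2 * (Cs ^ 2 * (lam1 ω Cs k ^ 2 - k ^ 2) - ω ^ 2)) * h

/-- The right-hand side is `D` with `λ₁, λ₂` replaced by `-λ₁, -λ₂`, so `Y₀ = D(-λ) / D(λ)`. -/
theorem Yd_zero_mul_Dq {ω Cs Cp k : ℝ} (hCs : Cs ≠ 0) (hD : Dq ω Cs Cp k ≠ 0) :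
    Yd ω Cs Cp k 0 * Dq ω Cs Cp k =
      -Z1 ω Cs Cp k + Z2 ω Cs Cp k -
        I * (ω : ℂ) ^ 3 * (lam1 ω Cs k + lam2 ω Cp k * (Cp : ℂ) / (Cs : ℂ)) := by
  simp only [Yd, b11, b22, b12, b21, ofReal_zero, mul_zero, exp_zero, one_mul]
  rw [div_mul_div_comm, div_mul_div_comm, div_sub_div_same, div_mul_eq_mul_div,
    mul_div_mul_right _ _ hD, div_eq_iff hD]
  simp only [Dq, Z2]
  linear_combination (-lam1 ω Cs k * lam2 ω Cp k) * Kq_sq (ω := ω) (Cp := Cp) (k := k) hCs +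
    (lam1 ω Cs k * lam2 ω Cp k * (Kq ω Cs Cp k ^ 2 + 4 * ω ^ 6 * (Cp / Cs))) * I_sq

theorem exists_real_Xd_Yd_zero {ω Cs Cp k ξ₁ ξ₂ : ℝ} (hω : 0 < ω) (hCs : 0 < Cs) (hCp : 0 < Cp)
    (hξ₁ : 0 < ξ₁) (hξ₂ : 0 < ξ₂) (h₁ : lam1 ω Cs k = I * ξ₁) (h₂ : lam2 ω Cp k = I * ξ₂) :
    ∃ X Y : ℝ, |Y| < 1 ∧ |X| < 1 - Y ∧ Xd ω Cs Cp k 0 = X ∧ Yd ω Cs Cp k 0 = Y := by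
  set a := Cs ^ 3 * (k ^ 2 - ξ₁ ^ 2) ^ 2 + ω ^ 2 * Cp * k ^ 2 +
    (4 * Cs ^ 3 * k ^ 2 + Cp * ω ^ 2) * ξ₁ * ξ₂
  set v := ω ^ 3 * (ξ₁ + ξ₂ * Cp / Cs)
  set t := ω ^ 3 * (ξ₂ * Cp / Cs - ξ₁)
  have ht : |t| < v := by
    have hsub : 0 < v - t := by simp only [v, t]; ring_nf; positivity
    have hadd : 0 < v + t := by simp only [v, t]; ring_nf; positivity
    exact abs_lt.2 ⟨by linarith, by linarith⟩
  have hS : 0 < a + v := by positivity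
  have hD : Dq ω Cs Cp k = -((a + v : ℝ) : ℂ) := by
    simp only [Dq, Z1, Z2, h₁, h₂, a, v]
    push_cast
    ring_nf
    simp only [I_sq, I_pow_four]
    ring_nf
  have hD0 : Dq ω Cs Cp k ≠ 0 := by
    rw [hD, neg_ne_zero, ofReal_ne_zero]
    exact hS.ne'
  have hdiv (x : ℝ) : ((x / (a + v) : ℝ) : ℂ) * Dq ω Cs Cp k = -(x : ℂ) := by
    rw [hD, mul_neg, ← ofReal_mul, div_mul_cancel₀ _ hS.ne']
  obtain ⟨hY, hX⟩ := abs_sub_div_add_lt_one_and_abs_two_mul_div_add_lt (a := a) (by positivity) ht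
  refine ⟨_, _, hY, hX, ?_, ?_⟩
  · rw [← mul_left_inj' hD0, Xd_zero_mul_Dq hD0, hdiv, h₁, h₂]
    simp only [t]
    push_cast
    ring_nf
    simp only [I_sq]
    ring_nf
  · rw [← mul_left_inj' hD0, Yd_zero_mul_Dq hCs.ne' hD0, hdiv]
    simp only [Z1, Z2, h₁, h₂, a, v]
    push_cast
    ring_nf
    simp only [I_sq, I_pow_four]
    ring_nf

theorem taylor_nonoverlapping_low_frequency_contraction
    (ω Cs Cp k : ℝ)
    (hω : 0 < ω) (hCs : 0 < Cs) (hCsCp : Cs < Cp)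
    (hk0 : 0 < k) (hk : k < ω / Cp) :
    ∀ z : ℂ, Qd ω Cs Cp k 0 z = 0 → ‖z‖ < 1 := by
  intro z hz
  obtain ⟨ξ₁, ξ₂, hξ₁, hξ₂, h₁, h₂⟩ := exists_lam_eq_I_mul_of_lt hCs hCsCp hk0 hk
  obtain ⟨X, Y, hY, hX, hXd, hYd⟩ :=
    exists_real_Xd_Yd_zero hω hCs (hCs.trans hCsCp) hξ₁ hξ₂ h₁ h₂
  rw [Qd, hXd, hYd] at hz
  exact norm_lt_one_of_sq_sub_mul_add_sq_eq_zero hY hX hz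

end
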